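/- Let p1, p2 ≥ 1 be integers with p1 ≡ p2 (mod 2) and set p := (p1+p2)/2. Then: (a) Σ_{r ∈ I_{min(p1,p2)}} (r/2)·binom(p1, (p1+r)/2)·binom(p2, (p2+r)/2) = 0 (i.e. C2(p1,p2) vanishes at τ = 1); and (b) Σ_{r ∈ I_{max(p1,p2)}} Σ_{s=1}^{max(p1,p2)} [ (p1/(p1+p2))·binom(p1, (p1+r)/2 − s)·binom(p2, (p2+r)/2) + (p2/(p1+p2))·binom(p1, (p1+r)/2)·binom(p2, (p2+r)/2 − s) ] = Σ_{l=0}^{p−1} binom(2p, l), so that the Hermitian limit τ = 1 of the subleading coefficient C2'(p1,p2) of the symplectic elliptic Ginibre spectral moments equals −(1/2)·Σ_{l=0}^{p−1} binom(2p, l). -/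

import Mathlib

/-!
(a) The summand is odd in `r`: the symmetry `binom(n, n - k) = binom(n, k)` exchanges
`(n + r)/2` and `(n - r)/2`, and `I_p` is symmetric about `0`.

(b) Summing over `s` turns `binom(p1, (p1 + r)/2 - s)` into the partial row sum
`∑_{j < (p1 + r)/2} binom(p1, j)`. Writing `r = p2 - 2m`, the first double sum becomes
`∑_{j + m < p} binom(p1, j) binom(p2, m)`, which is `∑_{l < p} binom(p1 + p2, l)` by Vandermonde.
The second double sum is the same with `p1` and `p2` exchanged, and the two weights add up to `1`.
-/

open Finset

/-- Binomial coefficient `binom(n, m)` for `n : ℕ`, `m : ℤ`, zero for `m < 0` or `m > n`. -/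
noncomputable def zbinom (n : ℕ) (m : ℤ) : ℝ :=
  if 0 ≤ m ∧ m ≤ (n : ℤ) then (n.choose m.toNat : ℝ) else 0

/-- `I_p = {−p, −p+2, …, p−2, p}`, the integers between `−p` and `p` with the parity of `p`. -/
noncomputable def Ip (p : ℕ) : Finset ℤ :=
  (Finset.Icc (-(p : ℤ)) (p : ℤ)).filter fun r => r % 2 = (p : ℤ) % 2

theorem zbinom_natCast (n k : ℕ) : zbinom n k = n.choose k := by
  unfold zbinom
  split_ifs with h
  · simp
  · rw [Nat.choose_eq_zero_of_lt (by omega), Nat.cast_zero]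

theorem zbinom_of_neg (n : ℕ) {k : ℤ} (hk : k < 0) : zbinom n k = 0 :=
  if_neg (by omega)

theorem zbinom_symm (n : ℕ) (k : ℤ) : zbinom n (n - k) = zbinom n k := by
  unfold zbinom
  by_cases hk : 0 ≤ k ∧ k ≤ n
  · rw [if_pos (by omega), if_pos hk, show ((n : ℤ) - k).toNat = n - k.toNat by omega,
      Nat.choose_symm (by omega)]
  · rw [if_neg (by omega), if_neg hk]

theorem zbinom_half_neg (n : ℕ) {r : ℤ} (hr : r % 2 = n % 2) :
    zbinom n ((n + -r) / 2) = zbinom n ((n + r) / 2) := by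
  rw [show ((n : ℤ) + -r) / 2 = n - (n + r) / 2 by omega, zbinom_symm]

theorem mem_Ip {p : ℕ} {r : ℤ} : r ∈ Ip p ↔ -(p : ℤ) ≤ r ∧ r ≤ p ∧ r % 2 = p % 2 := by
  simp [Ip, and_assoc]

theorem sum_Ip_eq_zero_of_odd {p : ℕ} {f : ℤ → ℝ} (hf : ∀ r ∈ Ip p, f (-r) = -f r) :
    ∑ r ∈ Ip p, f r = 0 := by
  have hneg : ∑ r ∈ Ip p, f (-r) = ∑ r ∈ Ip p, f r :=
    sum_nbij' Neg.neg Neg.neg (fun r hr => by rw [mem_Ip] at *; omega)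
      (fun r hr => by rw [mem_Ip] at *; omega) (by simp) (by simp) fun _ _ => rfl
  rw [sum_congr rfl hf, sum_neg_distrib] at hneg
  linarith

theorem sum_Ip_zbinom_mul {n M : ℕ} (hn : n ≤ M) (hpar : n % 2 = M % 2) (g : ℤ → ℝ) :
    ∑ r ∈ Ip M, zbinom n ((n + r) / 2) * g r
      = ∑ m ∈ range (n + 1), (n.choose m : ℝ) * g (n - 2 * m) := by
  have hinj : Set.InjOn (fun m : ℕ => (n : ℤ) - 2 * m) (range (n + 1)) :=
    fun a _ b _ h => by simp only at h; omega
  rw [← sum_subset (s₁ := (range (n + 1)).image fun m : ℕ => (n : ℤ) - 2 * m), sum_image hinj]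
  · refine sum_congr rfl fun m hm => ?_
    rw [show ((n : ℤ) + (n - 2 * m)) / 2 = n - m by omega, zbinom_symm, zbinom_natCast]
  · intro r hr
    obtain ⟨m, hm, rfl⟩ := mem_image.1 hr
    rw [mem_range] at hm
    rw [mem_Ip]
    omega
  · intro r hr hnot
    rw [mem_Ip] at hr
    have hout : ¬(0 ≤ ((n : ℤ) + r) / 2 ∧ ((n : ℤ) + r) / 2 ≤ n) := fun h =>
      hnot (mem_image.2 ⟨(n - (n + r) / 2).toNat, mem_range.2 (by omega), by omega⟩)
    rw [zbinom, if_neg hout, zero_mul]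

theorem sum_Icc_zbinom_sub (n M : ℕ) {k : ℤ} (hk : k ≤ M) :
    ∑ s ∈ Icc 1 M, zbinom n (k - s) = ∑ j ∈ range k.toNat, (n.choose j : ℝ) := by
  rw [← sum_subset (Icc_subset_Icc_right (show k.toNat ≤ M by omega))]
  · refine sum_nbij' (fun s => k.toNat - s) (fun j => k.toNat - j) ?_ ?_ ?_ ?_ ?_ <;>
      intro s hs <;> simp only [mem_Icc, mem_range] at hs
    · exact mem_range.2 (by omega)
    · exact mem_Icc.2 (by omega)
    · omega
    · omega
    · rw [show k - s = ((k.toNat - s : ℕ) : ℤ) by omega, zbinom_natCast]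
  · intro s hsM hs
    rw [mem_Icc] at hsM hs
    exact zbinom_of_neg n (by omega)

theorem sum_range_choose_add (a b p : ℕ) :
    ∑ l ∈ range p, (a + b).choose l
      = ∑ m ∈ range p, b.choose m * ∑ k ∈ range (p - m), a.choose k := by
  simp only [add_comm a b, Nat.add_choose_eq, Nat.sum_antidiagonal_eq_sum_range_succ_mk, mul_sum]
  exact sum_range_diag_flip p fun m k => b.choose m * a.choose k

theorem sum_Ip_sum_Icc_zbinom_sub_mul {a b M : ℕ} (ha : a ≤ M) (hb : b ≤ M)
    (hpa : a % 2 = M % 2) (hpb : b % 2 = M % 2) :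
    ∑ r ∈ Ip M, ∑ s ∈ Icc 1 M, zbinom a ((a + r) / 2 - s) * zbinom b ((b + r) / 2)
      = ∑ l ∈ range ((a + b) / 2), ((a + b).choose l : ℝ) := by
  set p := (a + b) / 2
  set F : ℕ → ℝ := fun m => b.choose m * ∑ j ∈ range (p - m), (a.choose j : ℝ)
  calc _ = ∑ r ∈ Ip M, zbinom b ((b + r) / 2) *
        ∑ j ∈ range (((a : ℤ) + r) / 2).toNat, (a.choose j : ℝ) := by
        refine sum_congr rfl fun r hr => ?_
        rw [mem_Ip] at hr
        rw [← sum_mul, mul_comm, sum_Icc_zbinom_sub a M (by omega)]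
    _ = ∑ m ∈ range (b + 1), F m := by
        rw [sum_Ip_zbinom_mul hb hpb]
        refine sum_congr rfl fun m hm => ?_
        rw [show (((a : ℤ) + (b - 2 * m)) / 2).toNat = p - m by omega]
    _ = ∑ m ∈ range (b + 1 + p), F m :=
        sum_subset (range_subset_range.2 (by omega)) fun m _ hm => by
          rw [mem_range] at hm
          simp [F, Nat.choose_eq_zero_of_lt (show b < m by omega)]
    _ = ∑ m ∈ range p, F m :=
        (sum_subset (range_subset_range.2 (by omega)) fun m _ hm => by
          rw [mem_range] at hm
          simp [F, Nat.sub_eq_zero_of_le (show p ≤ m by omega)]).symm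
    _ = _ := by
        simp only [F]
        exact_mod_cast (sum_range_choose_add a b p).symm

theorem sum_Ip_sum_Icc_mul_zbinom_sub {a b M : ℕ} (ha : a ≤ M) (hb : b ≤ M)
    (hpa : a % 2 = M % 2) (hpb : b % 2 = M % 2) :
    ∑ r ∈ Ip M, ∑ s ∈ Icc 1 M, zbinom a ((a + r) / 2) * zbinom b ((b + r) / 2 - s)
      = ∑ l ∈ range ((a + b) / 2), ((a + b).choose l : ℝ) := by
  simp_rw [mul_comm (zbinom a _), add_comm a b]
  exact sum_Ip_sum_Icc_zbinom_sub_mul hb ha hpb hpa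

theorem hermitian_limit_subleading_general (p1 p2 : ℕ)
    (hpar : p1 % 2 = p2 % 2) :
    (∑ r ∈ Ip (min p1 p2),
        ((r : ℝ) / 2) * zbinom p1 (((p1 : ℤ) + r) / 2) * zbinom p2 (((p2 : ℤ) + r) / 2) = 0)
    ∧ (∑ r ∈ Ip (max p1 p2), ∑ s ∈ Finset.Icc 1 (max p1 p2),
          (((p1 : ℝ) / ((p1 : ℝ) + p2)) *
              zbinom p1 (((p1 : ℤ) + r) / 2 - (s : ℤ)) * zbinom p2 (((p2 : ℤ) + r) / 2)
            + ((p2 : ℝ) / ((p1 : ℝ) + p2)) *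
              zbinom p1 (((p1 : ℤ) + r) / 2) * zbinom p2 (((p2 : ℤ) + r) / 2 - (s : ℤ)))
        = ∑ l ∈ Finset.range ((p1 + p2) / 2), ((p1 + p2).choose l : ℝ)) := by
  constructor
  · refine sum_Ip_eq_zero_of_odd fun r hr => ?_
    rw [mem_Ip] at hr
    rw [zbinom_half_neg p1 (by omega), zbinom_half_neg p2 (by omega)]
    push_cast
    ring
  · have h1 : p1 ≤ max p1 p2 := le_max_left p1 p2
    have h2 : p2 ≤ max p1 p2 := le_max_right p1 p2
    have hT1 := sum_Ip_sum_Icc_zbinom_sub_mul h1 h2 (by omega) (by omega)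
    have hT2 := sum_Ip_sum_Icc_mul_zbinom_sub h1 h2 (by omega) (by omega)
    simp only [mul_assoc, sum_add_distrib, ← mul_sum] at hT1 hT2 ⊢
    rw [hT1, hT2, ← add_mul, ← add_div]
    rcases eq_or_ne ((p1 : ℝ) + p2) 0 with h | h
    · have hzero : p1 + p2 = 0 := by exact_mod_cast h
      simp [hzero]
    · rw [div_self h, one_mul]

/-- Hermitian limit `τ = 1` of the subleading coefficients of the symplectic
elliptic Ginibre spectral moments. With `p1, p2 ≥ 1` of the same parity and `p = (p1+p2)/2`:
(a) `∑_{r ∈ I_{min(p1,p2)}} (r/2) binom(p1,(p1+r)/2) binom(p2,(p2+r)/2) = 0`;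
(b) `∑_{r ∈ I_{max(p1,p2)}} ∑_{s=1}^{max(p1,p2)} [(p1/(p1+p2)) binom(p1,(p1+r)/2−s) binom(p2,(p2+r)/2)
    + (p2/(p1+p2)) binom(p1,(p1+r)/2) binom(p2,(p2+r)/2−s)] = ∑_{l=0}^{p−1} binom(2p,l)`. -/
theorem hermitian_limit_subleading (p1 p2 : ℕ) (hp1 : 1 ≤ p1) (hp2 : 1 ≤ p2)
    (hpar : p1 % 2 = p2 % 2) :
    (∑ r ∈ Ip (min p1 p2),
        ((r : ℝ) / 2) * zbinom p1 (((p1 : ℤ) + r) / 2) * zbinom p2 (((p2 : ℤ) + r) / 2) = 0)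
    ∧ (∑ r ∈ Ip (max p1 p2), ∑ s ∈ Finset.Icc 1 (max p1 p2),
          (((p1 : ℝ) / ((p1 : ℝ) + p2)) *
              zbinom p1 (((p1 : ℤ) + r) / 2 - (s : ℤ)) * zbinom p2 (((p2 : ℤ) + r) / 2)
            + ((p2 : ℝ) / ((p1 : ℝ) + p2)) *
              zbinom p1 (((p1 : ℤ) + r) / 2) * zbinom p2 (((p2 : ℤ) + r) / 2 - (s : ℤ)))
        = ∑ l ∈ Finset.range ((p1 + p2) / 2), ((p1 + p2).choose l : ℝ)) :=
  hermitian_limit_subleading_general p1 p2 hpar
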